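/- With Γ₁, Γ₂, Δ, M, 𝓔 as above, the isomorphism Θ_V : Hom((𝓔 ⊗ M)_Δ, V) → Z¹(Γ₁, Hom(M, V)), functorial in the abelian group V, can be chosen so that for every V and every homomorphism α : M → V, the element (α|_{I_ΔM}) ∘ q of Hom((𝓔 ⊗ M)_Δ, V) is sent by Θ_V to the coboundary γ ↦ γ·α − α in B¹(Γ₁, Hom(M, V)). -/

import Mathlib

/-!
`γ ↦ ([γ σ(πγ)⁻¹], πγ - 1)` is a crossed homomorphism `Γ₁ → 𝓔` (this is what the formula for
the action on `𝓔` encodes) and its values generate `𝓔`. Hence `Θ_V ψ = (γ ↦ (m ↦ ψ[(γ - 1) ⊗ m]))`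
is an injective map into the cocycles. Conversely a cocycle `Φ` is a homomorphism on `Γ₂`, on
which the action is trivial, so it defines `𝓔 → Hom(M, V)` by `Φ` on `Γ₂^{ab}` and
`c - 1 ↦ Φ(σ c)` on `I_Δ`; it sends `γ - 1` to `Φ γ`, and writing `d • (γ - 1)` as
`(σ(d) γ - 1) - (σ(d) - 1)` shows that it descends to the coinvariants. Finally `q` sends
`(γ - 1) ⊗ m` to `π(γ)⁻¹ • m - m`, so `Θ_V (α ∘ q)` is the coboundary of `α`.
-/

open scoped TensorProduct

section EModule

variable {Γ₁ Δ : Type} [Group Γ₁] [Group Δ]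

/-- The augmentation map `ℤ[Δ] → ℤ` (sum of coefficients), with `ℤ[Δ]`
realized as `Δ →₀ ℤ`. -/
noncomputable def augmentation (Δ : Type) : (Δ →₀ ℤ) →+ ℤ :=
  Finsupp.liftAddHom fun _ => AddMonoidHom.id ℤ

/-- The augmentation ideal `I_Δ ⊆ ℤ[Δ]`, as an additive subgroup. -/
noncomputable def augIdeal (Δ : Type) : AddSubgroup (Δ →₀ ℤ) := (augmentation Δ).ker

/-- The element `c − 1` of `I_Δ`. -/
noncomputable def aidElt [Group Δ] (c : Δ) : ↥(augIdeal Δ) :=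
  ⟨Finsupp.single c 1 - Finsupp.single 1 1, by
    simp [augIdeal, AddMonoidHom.mem_ker, map_sub, augmentation,
      Finsupp.liftAddHom_apply_single]⟩

/-- The element `a − b` of `I_Δ`. -/
noncomputable def aidElt2 [Group Δ] (a b : Δ) : ↥(augIdeal Δ) :=
  ⟨Finsupp.single a 1 - Finsupp.single b 1, by
    simp [augIdeal, AddMonoidHom.mem_ker, map_sub, augmentation,
      Finsupp.liftAddHom_apply_single]⟩

/-- The underlying abelian group `Γ₂^{ab} ⊕ I_Δ` of the ℤ[Δ]-module 𝓔
(with `Γ₂ = ker π` and `Γ₂^{ab}` its abelianization, written additively). -/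
abbrev EMod (π : Γ₁ →* Δ) : Type :=
  Additive (Abelianization ↥π.ker) × ↥(augIdeal Δ)

/-- The Δ-action `d·[k] = [σ(d) k σ(d)⁻¹]` on `Γ₂^{ab}` (conjugation uses
normality of `Γ₂ = ker π`). -/
noncomputable def conjAb (π : Γ₁ →* Δ) (σ : Δ → Γ₁) (d : Δ) :
    Abelianization ↥π.ker →* Abelianization ↥π.ker :=
  Abelianization.map (MulAut.conjNormal (σ d)).toMonoidHom

/-- The 2-cocycle `κ(d,c) = [σ(d)σ(c)σ(dc)⁻¹] ∈ Γ₂^{ab}`. -/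
noncomputable def kappaE (π : Γ₁ →* Δ) (σ : Δ → Γ₁) (hσ : ∀ c, π (σ c) = c)
    (d c : Δ) : Abelianization ↥π.ker :=
  Abelianization.of ⟨σ d * σ c * (σ (d * c))⁻¹, by
    have : π (σ d * σ c * (σ (d * c))⁻¹) = 1 := by
      rw [map_mul, map_mul, map_inv, hσ, hσ, hσ, mul_inv_cancel]
    simpa [MonoidHom.mem_ker] using this⟩

/-- The defining formula of the Δ-action on `𝓔 = Γ₂^{ab} ⊕ I_Δ`:
`d ∗ (g, c−1) = (d·g + κ(d,c), dc − d)`, extended ℤ-linearly.  (The elements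
`(g, c−1)` generate `𝓔`, so this determines the action.) -/
def EActionFormula (π : Γ₁ →* Δ) (σ : Δ → Γ₁) (hσ : ∀ c, π (σ c) = c)
    [DistribMulAction Δ (EMod π)] : Prop :=
  ∀ (d : Δ) (g : Abelianization ↥π.ker) (c : Δ),
    d • ((Additive.ofMul g, aidElt c) : EMod π) =
      (Additive.ofMul (conjAb π σ d g * kappaE π σ hσ d c), aidElt2 (d * c) d)

variable (M : Type) [AddCommGroup M] [DistribMulAction Δ M]

/-- `T = 𝓔 ⊗ M`. -/
abbrev TMod (π : Γ₁ →* Δ) : Type := (EMod π) ⊗[ℤ] M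

/-- The diagonal action of `d ∈ Δ` on `𝓔 ⊗ M`. -/
noncomputable def diagT (π : Γ₁ →* Δ) [DistribMulAction Δ (EMod π)] (d : Δ) :
    TMod M π →ₗ[ℤ] TMod M π :=
  TensorProduct.map ((DistribMulAction.toAddMonoidHom (EMod π) d).toIntLinearMap)
    ((DistribMulAction.toAddMonoidHom M d).toIntLinearMap)

/-- The subgroup of `𝓔 ⊗ M` generated by the elements `d•t − t`. -/
noncomputable def coinvKerT (π : Γ₁ →* Δ) [DistribMulAction Δ (EMod π)] :
    AddSubgroup (TMod M π) :=
  AddSubgroup.closure {x | ∃ (d : Δ) (t : TMod M π), x = diagT M π d t - t}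

/-- The Δ-coinvariants `(𝓔 ⊗ M)_Δ`. -/
abbrev CoinvT (π : Γ₁ →* Δ) [DistribMulAction Δ (EMod π)] : Type :=
  TMod M π ⧸ coinvKerT M π

/-- 1-cocycles `Z¹(Γ₁, Hom(M,V))`, where `Γ₁` acts on `Hom(M,V)` by
`(γ·f)(m) = f(π(γ)⁻¹·m)`. -/
noncomputable def ZOneM (π : Γ₁ →* Δ) (V : Type) [AddCommGroup V] :
    AddSubgroup (Γ₁ → (M →+ V)) where
  carrier := {Φ | ∀ (g h : Γ₁) (m : M), Φ (g * h) m = Φ g m + Φ h ((π g)⁻¹ • m)}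
  zero_mem' := by intro g h m; simp
  add_mem' := by
    intro Φ Ψ hΦ hΨ g h m
    simp only [Pi.add_apply, AddMonoidHom.add_apply, hΦ g h m, hΨ g h m]
    abel
  neg_mem' := by
    intro Φ hΦ g h m
    simp only [Pi.neg_apply, AddMonoidHom.neg_apply, hΦ g h m]
    abel

/-- The subgroup `I_Δ·M ⊆ M` generated by the elements `c•m − m`. -/
noncomputable def idealSMulM : AddSubgroup M :=
  AddSubgroup.closure {x : M | ∃ (c : Δ) (m : M), x = c • m - m}

/-- First differential `(Γ₁ →₀ M) → M`, `[g]⊗m ↦ π(g)•m − m`, of the complex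
computing `H_1(Γ₁, M)` (with `Γ₁` acting on `M` through `π`). -/
noncomputable def dOne (π : Γ₁ →* Δ) : (Γ₁ →₀ M) →+ M :=
  Finsupp.liftAddHom fun g =>
    DistribMulAction.toAddMonoidHom M (π g) - AddMonoidHom.id M

/-- Second differential `(Γ₁×Γ₁ →₀ M) → (Γ₁ →₀ M)`,
`[g|h]⊗m ↦ [h]⊗m − [gh]⊗m + [g]⊗(π(h)•m)`. -/
noncomputable def dTwo (π : Γ₁ →* Δ) : ((Γ₁ × Γ₁) →₀ M) →+ (Γ₁ →₀ M) :=
  Finsupp.liftAddHom fun p =>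
    (Finsupp.singleAddHom p.2 - Finsupp.singleAddHom (p.1 * p.2)
      + (Finsupp.singleAddHom p.1).comp (DistribMulAction.toAddMonoidHom M (π p.2)) :
        M →+ (Γ₁ →₀ M))

/-- The group homology `H_1(Γ₁, M)` (action of `Γ₁` on `M` through `π`). -/
abbrev HOne (π : Γ₁ →* Δ) : Type :=
  ↥(dOne M π).ker ⧸ ((dTwo M π).range.addSubgroupOf (dOne M π).ker)

end EModule

section AugmentationIdeal

variable {Δ : Type} [Group Δ]

lemma aidElt_one : (aidElt 1 : augIdeal Δ) = 0 :=
  Subtype.ext (sub_self _)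

variable (Δ) in
noncomputable def augRetract : (Δ →₀ ℤ) →+ augIdeal Δ :=
  Finsupp.liftAddHom fun c => zmultiplesHom _ (aidElt c)

lemma coe_augRetract (f : Δ →₀ ℤ) :
    (augRetract Δ f : Δ →₀ ℤ) = f - augmentation Δ f • Finsupp.single 1 1 := by
  induction f using Finsupp.induction_linear with
  | zero => simp
  | add f g hf hg =>
    simp only [map_add, AddSubgroup.coe_add, hf, hg, add_smul]
    abel
  | single c n =>
    simp [augRetract, augmentation, aidElt, smul_sub, Finsupp.smul_single]

lemma augRetract_mem_closure (f : Δ →₀ ℤ) :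
    augRetract Δ f ∈ AddSubgroup.closure (Set.range aidElt) := by
  induction f using Finsupp.induction_linear with
  | zero => simp
  | add f g hf hg => simpa only [map_add] using add_mem hf hg
  | single c n =>
    simpa [augRetract] using zsmul_mem (AddSubgroup.subset_closure (Set.mem_range_self c)) n

lemma closure_range_aidElt : AddSubgroup.closure (Set.range (aidElt (Δ := Δ))) = ⊤ := by
  refine eq_top_iff.mpr fun s _ => ?_
  have hs : augRetract Δ s = s := by
    have : augmentation Δ s = 0 := s.2
    exact Subtype.ext (by rw [coe_augRetract, this, zero_smul, sub_zero])
  exact hs ▸ augRetract_mem_closure (s : Δ →₀ ℤ)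

noncomputable def augLift {A : Type} [AddCommGroup A] (f : Δ → A) : augIdeal Δ →+ A :=
  (Finsupp.liftAddHom fun c => zmultiplesHom A (f c)).comp (augIdeal Δ).subtype

lemma augLift_aidElt {A : Type} [AddCommGroup A] (f : Δ → A) (c : Δ) :
    augLift f (aidElt c) = f c - f 1 := by
  simp only [augLift, aidElt, AddMonoidHom.comp_apply, AddSubgroup.coe_subtype, map_sub,
    Finsupp.liftAddHom_apply_single, zmultiplesHom_apply, one_zsmul]

end AugmentationIdeal

section CrossedHom

variable {Γ₁ Δ : Type} [Group Γ₁] [Group Δ] {π : Γ₁ →* Δ} {σ : Δ → Γ₁}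
  (hσ : ∀ c, π (σ c) = c)

def kerPart (γ : Γ₁) : π.ker :=
  ⟨γ * (σ (π γ))⁻¹, by simp [MonoidHom.mem_ker, hσ]⟩

/-- The crossed homomorphism `Γ₁ → 𝓔` playing the role of `γ ↦ γ - 1`. -/
noncomputable def crossedHomE (γ : Γ₁) : EMod π :=
  (Additive.ofMul (Abelianization.of (kerPart hσ γ)), aidElt (π γ))

lemma crossedHomE_mul [DistribMulAction Δ (EMod π)] (hE : EActionFormula π σ hσ) (γ δ : Γ₁) :
    crossedHomE hσ (γ * δ) = crossedHomE hσ γ + π γ • crossedHomE hσ δ := by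
  rw [crossedHomE, crossedHomE, crossedHomE, hE]
  refine Prod.ext ?_ (Subtype.ext ?_)
  · show Additive.ofMul _ = Additive.ofMul _ + Additive.ofMul _
    rw [← ofMul_mul, conjAb, Abelianization.map_of, kappaE, ← map_mul, ← map_mul]
    congr 2
    refine Subtype.ext ?_
    simp only [kerPart, map_mul, Subgroup.coe_mul, MulEquiv.coe_toMonoidHom,
      MulAut.conjNormal_apply]
    group
  · simp only [aidElt, aidElt2, map_mul, Prod.snd_add, AddSubgroup.coe_add]
    abel

lemma crossedHomE_mul_sigma (k : π.ker) (c : Δ) :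
    crossedHomE hσ (k * σ c) = (Additive.ofMul (Abelianization.of k), aidElt c) := by
  have hc : π (k * σ c) = c := by rw [map_mul, k.2, hσ, one_mul]
  rw [crossedHomE, hc]
  congr 3
  exact Subtype.ext (by simp [kerPart, hc])

lemma closure_range_crossedHomE :
    AddSubgroup.closure (Set.range (crossedHomE hσ)) = ⊤ := by
  refine eq_top_iff.mpr fun ⟨a, s⟩ _ => ?_
  obtain ⟨k, rfl⟩ : ∃ k : π.ker, Additive.ofMul (Abelianization.of k) = a :=
    ⟨_, congrArg Additive.ofMul (QuotientGroup.mk_surjective (Additive.toMul a)).choose_spec⟩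
  have hinl : ((Additive.ofMul (Abelianization.of k), 0) : EMod π) ∈
      AddSubgroup.closure (Set.range (crossedHomE hσ)) :=
    AddSubgroup.subset_closure ⟨k * σ 1, by rw [crossedHomE_mul_sigma, aidElt_one]⟩
  have hinr : AddMonoidHom.inr _ _ '' Set.range aidElt ⊆ Set.range (crossedHomE hσ) := by
    rintro _ ⟨_, ⟨c, rfl⟩, rfl⟩
    exact ⟨(1 : π.ker) * σ c, by rw [crossedHomE_mul_sigma, map_one]; rfl⟩
  have hs : ((0, s) : EMod π) ∈ AddSubgroup.closure (Set.range (crossedHomE hσ)) := by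
    refine AddSubgroup.closure_mono hinr ?_
    rw [← AddMonoidHom.map_closure, closure_range_aidElt]
    exact ⟨s, AddSubgroup.mem_top s, rfl⟩
  simpa using add_mem hinl hs

lemma EMod.addMonoidHom_ext {A : Type} [AddMonoid A] {f g : EMod π →+ A}
    (h : ∀ γ, f (crossedHomE hσ γ) = g (crossedHomE hσ γ)) : f = g :=
  AddMonoidHom.eq_of_eqOn_dense (closure_range_crossedHomE hσ) (by rintro _ ⟨γ, rfl⟩; exact h γ)

end CrossedHom

section Coinvariants

variable {Γ₁ Δ : Type} [Group Γ₁] [Group Δ] {π : Γ₁ →* Δ} {σ : Δ → Γ₁}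
  (hσ : ∀ c, π (σ c) = c) (M : Type) [AddCommGroup M] {V : Type} [AddCommGroup V]

lemma TMod.addMonoidHom_ext {f g : TMod M π →+ V}
    (h : ∀ γ m, f (crossedHomE hσ γ ⊗ₜ m) = g (crossedHomE hσ γ ⊗ₜ m)) : f = g :=
  AddMonoidHom.toIntLinearMap_injective <| TensorProduct.ext' fun x m =>
    DFunLike.congr_fun (EMod.addMonoidHom_ext hσ
      (f := f.comp ((TensorProduct.mk ℤ _ M).flip m).toAddMonoidHom)
      (g := g.comp ((TensorProduct.mk ℤ _ M).flip m).toAddMonoidHom) (fun γ => h γ m)) x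

variable [DistribMulAction Δ (EMod π)] [DistribMulAction Δ M]

lemma CoinvT.addMonoidHom_ext {f g : CoinvT M π →+ V}
    (h : ∀ γ m, f ((crossedHomE hσ γ ⊗ₜ m : TMod M π) : CoinvT M π) =
      g ((crossedHomE hσ γ ⊗ₜ m : TMod M π) : CoinvT M π)) : f = g :=
  QuotientAddGroup.addMonoidHom_ext _ (TMod.addMonoidHom_ext hσ M h)

lemma CoinvT.mk_smul_tmul_smul (d : Δ) (x : EMod π) (m : M) :
    (((d • x) ⊗ₜ (d • m) : TMod M π) : CoinvT M π) = ((x ⊗ₜ m : TMod M π) : CoinvT M π) :=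
  QuotientAddGroup.eq_iff_sub_mem.mpr (AddSubgroup.subset_closure ⟨d, x ⊗ₜ m, rfl⟩)

noncomputable def theta (ψ : CoinvT M π →+ V) (γ : Γ₁) : M →+ V :=
  ψ.comp ((QuotientAddGroup.mk' _).comp (TensorProduct.mk ℤ (EMod π) M (crossedHomE hσ γ)))

lemma theta_apply (ψ : CoinvT M π →+ V) (γ : Γ₁) (m : M) :
    theta hσ M ψ γ m = ψ ((crossedHomE hσ γ ⊗ₜ m : TMod M π) : CoinvT M π) := rfl

lemma theta_mem_ZOneM (hE : EActionFormula π σ hσ) (ψ : CoinvT M π →+ V) :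
    theta hσ M ψ ∈ ZOneM M π V := by
  intro g h m
  rw [theta_apply, theta_apply, theta_apply, crossedHomE_mul hσ hE, TensorProduct.add_tmul,
    QuotientAddGroup.mk_add, map_add, ← CoinvT.mk_smul_tmul_smul M (π g) _ ((π g)⁻¹ • m),
    smul_inv_smul]

end Coinvariants

section Cocycles

variable {Γ₁ Δ : Type} [Group Γ₁] [Group Δ] {π : Γ₁ →* Δ} {σ : Δ → Γ₁}
  {M : Type} [AddCommGroup M] [DistribMulAction Δ M] {V : Type} [AddCommGroup V]
  {Φ : Γ₁ → (M →+ V)}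

namespace ZOneM

lemma apply_mul (hΦ : Φ ∈ ZOneM M π V) (g h : Γ₁) (m : M) :
    Φ (g * h) m = Φ g m + Φ h ((π g)⁻¹ • m) :=
  hΦ g h m

lemma apply_one (hΦ : Φ ∈ ZOneM M π V) : Φ 1 = 0 :=
  AddMonoidHom.ext fun m => by simpa using apply_mul hΦ 1 1 m

lemma apply_ker_mul (hΦ : Φ ∈ ZOneM M π V) (k : π.ker) (g : Γ₁) :
    Φ (k * g) = Φ k + Φ g :=
  AddMonoidHom.ext fun m => by rw [apply_mul hΦ, k.2, inv_one, one_smul]; rfl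

/-- On `Γ₂` the action is trivial, so a cocycle restricts to a homomorphism and factors
through `Γ₂^{ab}`. -/
noncomputable def abHom (hΦ : Φ ∈ ZOneM M π V) : Additive (Abelianization π.ker) →+ (M →+ V) :=
  MonoidHom.toAdditiveLeft <| Abelianization.lift
    { toFun := fun k => Multiplicative.ofAdd (Φ k)
      map_one' := by simp [apply_one hΦ]
      map_mul' := fun k l => by simp [apply_ker_mul hΦ] }

lemma abHom_of (hΦ : Φ ∈ ZOneM M π V) (k : π.ker) :
    abHom hΦ (Additive.ofMul (Abelianization.of k)) = Φ k := by
  simp [abHom]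

end ZOneM

variable (σ) in
noncomputable def eHom (hΦ : Φ ∈ ZOneM M π V) : EMod π →+ (M →+ V) :=
  (ZOneM.abHom hΦ).coprod (augLift (Φ ∘ σ))

variable (hσ : ∀ c, π (σ c) = c) (hσ1 : σ 1 = 1)

include hσ1 in
lemma eHom_crossedHomE (hΦ : Φ ∈ ZOneM M π V) (γ : Γ₁) :
    eHom σ hΦ (crossedHomE hσ γ) = Φ γ := by
  have hγ : (kerPart hσ γ : Γ₁) * σ (π γ) = γ := inv_mul_cancel_right γ _
  rw [eHom, AddMonoidHom.coprod_apply, crossedHomE, ZOneM.abHom_of, augLift_aidElt,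
    Function.comp_apply, Function.comp_apply, hσ1, ZOneM.apply_one hΦ, sub_zero,
    ← ZOneM.apply_ker_mul hΦ, hγ]

variable [DistribMulAction Δ (EMod π)] (hE : EActionFormula π σ hσ)

include hσ1 hE in
lemma eHom_smul_apply (hΦ : Φ ∈ ZOneM M π V) (d : Δ) (x : EMod π) (m : M) :
    eHom σ hΦ (d • x) (d • m) = eHom σ hΦ x m := by
  suffices (AddMonoidHom.eval (d • m)).comp ((eHom σ hΦ).comp (DistribSMul.toAddMonoidHom _ d)) =
      (AddMonoidHom.eval m).comp (eHom σ hΦ) from DFunLike.congr_fun this x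
  refine EMod.addMonoidHom_ext hσ fun γ => ?_
  have hsmul : d • crossedHomE hσ γ = crossedHomE hσ (σ d * γ) - crossedHomE hσ (σ d) := by
    rw [crossedHomE_mul hσ hE, hσ, add_sub_cancel_left]
  simp only [AddMonoidHom.comp_apply, DistribSMul.toAddMonoidHom_apply,
    AddMonoidHom.eval_apply_apply, hsmul, map_sub, eHom_crossedHomE hσ hσ1]
  rw [ZOneM.apply_mul hΦ, hσ, inv_smul_smul, add_sub_cancel_left]

variable (σ) in
noncomputable def tensorHom (hΦ : Φ ∈ ZOneM M π V) : TMod M π →+ V :=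
  TensorProduct.liftAddHom (eHom σ hΦ) fun n x m => by simp

include hσ1 hE in
lemma tensorHom_diagT (hΦ : Φ ∈ ZOneM M π V) (d : Δ) :
    (tensorHom σ hΦ).comp (diagT M π d).toAddMonoidHom = tensorHom σ hΦ :=
  TMod.addMonoidHom_ext hσ M fun _ m => eHom_smul_apply hσ hσ1 hE hΦ d _ m

noncomputable def coinvHom (hΦ : Φ ∈ ZOneM M π V) : CoinvT M π →+ V :=
  QuotientAddGroup.lift _ (tensorHom σ hΦ) <| (AddSubgroup.closure_le _).mpr <| by
    rintro _ ⟨d, t, rfl⟩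
    simpa [sub_eq_zero] using DFunLike.congr_fun (tensorHom_diagT hσ hσ1 hE hΦ d) t

lemma coinvHom_mk_tmul (hΦ : Φ ∈ ZOneM M π V) (x : EMod π) (m : M) :
    coinvHom hσ hσ1 hE hΦ ((x ⊗ₜ m : TMod M π) : CoinvT M π) = eHom σ hΦ x m :=
  rfl

end Cocycles

section ThetaEquiv

variable {Γ₁ Δ : Type} [Group Γ₁] [Group Δ] {π : Γ₁ →* Δ} {σ : Δ → Γ₁}
  (hσ : ∀ c, π (σ c) = c) (hσ1 : σ 1 = 1) [DistribMulAction Δ (EMod π)]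
  (hE : EActionFormula π σ hσ) (M : Type) [AddCommGroup M] [DistribMulAction Δ M]
  {V : Type} [AddCommGroup V]

noncomputable def thetaEquiv : (CoinvT M π →+ V) ≃+ ZOneM M π V where
  toFun ψ := ⟨theta hσ M ψ, theta_mem_ZOneM hσ M hE ψ⟩
  invFun Φ := coinvHom hσ hσ1 hE Φ.2
  left_inv ψ := CoinvT.addMonoidHom_ext hσ M fun γ m => by
    rw [coinvHom_mk_tmul, eHom_crossedHomE hσ hσ1]
    rfl
  right_inv Φ := Subtype.ext <| funext fun γ => AddMonoidHom.ext fun m =>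
    (coinvHom_mk_tmul hσ hσ1 hE Φ.2 _ m).trans (by rw [eHom_crossedHomE hσ hσ1])
  map_add' _ _ := rfl

lemma thetaEquiv_apply (ψ : CoinvT M π →+ V) (γ : Γ₁) (m : M) :
    (thetaEquiv hσ hσ1 hE M ψ : Γ₁ → (M →+ V)) γ m =
      ψ ((crossedHomE hσ γ ⊗ₜ m : TMod M π) : CoinvT M π) :=
  rfl

end ThetaEquiv

section Statement6

variable {Γ₁ Δ : Type} [Group Γ₁] [Group Δ]

theorem statement6_general
    (π : Γ₁ →* Δ)
    (σ : Δ → Γ₁) (hσ : ∀ c, π (σ c) = c) (hσ1 : σ 1 = 1)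
    [DistribMulAction Δ (EMod π)] (hE : EActionFormula π σ hσ)
    (M : Type) [AddCommGroup M] [DistribMulAction Δ M]
    (q : CoinvT M π →+ M)
    (hq : ∀ (g : Abelianization ↥π.ker) (c : Δ) (m : M),
      q (QuotientAddGroup.mk (((Additive.ofMul g, aidElt c) : EMod π) ⊗ₜ[ℤ] m)) =
        c⁻¹ • m - m) :
    ∃ Θ : ∀ (V : Type) [AddCommGroup V],
        (CoinvT M π →+ V) ≃+ ↥(ZOneM M π V),
      -- functoriality in V ...
      (∀ (V W : Type) [AddCommGroup V] [AddCommGroup W] (f : V →+ W)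
          (ψ : CoinvT M π →+ V) (g : Γ₁) (m : M),
        ((Θ W (f.comp ψ) : Γ₁ → (M →+ W)) g) m =
          f (((Θ V ψ : Γ₁ → (M →+ V)) g) m))
      -- ... and: Θ_V sends (α|_{I_ΔM}) ∘ q to the coboundary γ ↦ γ·α − α:
      ∧ (∀ (V : Type) [AddCommGroup V] (α : M →+ V) (b : ↥(ZOneM M π V)),
          (∀ (γ : Γ₁) (m : M), ((b : Γ₁ → (M →+ V)) γ) m = α ((π γ)⁻¹ • m) - α m) →
          Θ V (α.comp q) = b) := by
  refine ⟨fun V _ => thetaEquiv hσ hσ1 hE M, fun V W _ _ f ψ g m => rfl, fun V _ α b hb => ?_⟩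
  refine Subtype.ext <| funext fun γ => AddMonoidHom.ext fun m => ?_
  rw [thetaEquiv_apply, AddMonoidHom.comp_apply, crossedHomE, hq, map_sub, hb]

theorem statement6
    (π : Γ₁ →* Δ) (hπ : Function.Surjective π)
    (σ : Δ → Γ₁) (hσ : ∀ c, π (σ c) = c) (hσ1 : σ 1 = 1)
    [Fintype Δ]
    [DistribMulAction Δ (EMod π)] (hE : EActionFormula π σ hσ)
    (M : Type) [AddCommGroup M] [DistribMulAction Δ M]
    (q : CoinvT M π →+ M)
    (hq : ∀ (g : Abelianization ↥π.ker) (c : Δ) (m : M),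
      q (QuotientAddGroup.mk (((Additive.ofMul g, aidElt c) : EMod π) ⊗ₜ[ℤ] m)) =
        c⁻¹ • m - m) :
    ∃ Θ : ∀ (V : Type) [AddCommGroup V],
        (CoinvT M π →+ V) ≃+ ↥(ZOneM M π V),
      -- functoriality in V ...
      (∀ (V W : Type) [AddCommGroup V] [AddCommGroup W] (f : V →+ W)
          (ψ : CoinvT M π →+ V) (g : Γ₁) (m : M),
        ((Θ W (f.comp ψ) : Γ₁ → (M →+ W)) g) m =
          f (((Θ V ψ : Γ₁ → (M →+ V)) g) m))
      -- ... and: Θ_V sends (α|_{I_ΔM}) ∘ q to the coboundary γ ↦ γ·α − α: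
      ∧ (∀ (V : Type) [AddCommGroup V] (α : M →+ V) (b : ↥(ZOneM M π V)),
          (∀ (γ : Γ₁) (m : M), ((b : Γ₁ → (M →+ V)) γ) m = α ((π γ)⁻¹ • m) - α m) →
          Θ V (α.comp q) = b) :=
  statement6_general π σ hσ hσ1 hE M q hq

end Statement6
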